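/- Let 0<q<1 and ν > 0. The Jackson integral ∫_{-1}^1 (q²z²;q²)_∞/(q^{2ν+1}z²;q²)_∞ d_q z, i.e. 2(1-q)Σ_{m=0}^∞ q^m (q^{2m+2};q²)_∞/(q^{2ν+2m+1};q²)_∞, equals (2/(1+q))·B_{q²}(ν+1/2, 1/2), where B_{q²}(s,t) = Γ_{q²}(s)Γ_{q²}(t)/Γ_{q²}(s+t) and Γ_{q²}(s) = ((q²;q²)_∞/(q^{2s};q²)_∞)(1-q²)^{1-s}. -/

import Mathlib

/-- The infinite q-Pochhammer symbol over the reals. -/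
noncomputable def qpR (q x : ℝ) : ℝ := ∏' n : ℕ, (1 - x * q ^ n)

/-- The q²-gamma function `Γ_{q²}(s) = ((q²;q²)_∞/(q^{2s};q²)_∞)(1-q²)^{1-s}`. -/
noncomputable def qGamma2 (q s : ℝ) : ℝ :=
  qpR (q ^ 2) (q ^ 2) / qpR (q ^ 2) (q ^ (2 * s)) * (1 - q ^ 2) ^ (1 - s)

/-- The q²-beta function. -/
noncomputable def qBeta2 (q s t : ℝ) : ℝ :=
  qGamma2 q s * qGamma2 q t / qGamma2 q (s + t)

/-! With `Q = q²` and `A = q^{2ν+1}`, splitting `(x;Q)_∞ = (x;Q)_m (xQ^m;Q)_∞` turns the `m`-th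
term of the Jackson sum into `(Q;Q)_∞/(A;Q)_∞ · (A;Q)_m/(Q;Q)_m · q^m`, and the q-binomial theorem
sums these to `(Q;Q)_∞ (Aq;Q)_∞ / ((A;Q)_∞ (q;Q)_∞)`. The powers of `1 - Q` in `B_{q²}(ν+1/2, 1/2)`
combine to `1 - q² = (1 - q)(1 + q)`, which accounts for the prefactors.

The q-binomial theorem `∑ (a;Q)_m/(Q;Q)_m z^m = (az;Q)_∞/(z;Q)_∞` comes from the functional
equation `(1 - z) F(z) = (1 - az) F(zQ)`: iterating it `n` times and letting `n → ∞`, where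
`F(zQⁿ) → F(0) = 1` by dominated convergence. -/

open Real Filter Topology Finset

section QPochhammer

variable {Q : ℝ}

lemma abs_mul_pow_lt_one (hQ : |Q| < 1) {x : ℝ} (hx : |x| < 1) (n : ℕ) : |x * Q ^ n| < 1 := by
  rw [abs_mul, abs_pow]
  exact lt_of_le_of_lt (mul_le_of_le_one_right (abs_nonneg x) (pow_le_one₀ (abs_nonneg Q) hQ.le)) hx

lemma one_sub_mul_pow_pos (hQ : |Q| < 1) {x : ℝ} (hx : |x| < 1) (n : ℕ) : 0 < 1 - x * Q ^ n := by
  linarith [(abs_lt.1 (abs_mul_pow_lt_one hQ hx n)).2]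

lemma summable_neg_mul_pow (hQ : |Q| < 1) (x : ℝ) : Summable fun n : ℕ => -(x * Q ^ n) :=
  ((summable_geometric_of_abs_lt_one hQ).mul_left x).neg

lemma multipliable_qpR (hQ : |Q| < 1) (x : ℝ) : Multipliable fun n : ℕ => 1 - x * Q ^ n := by
  simpa only [← sub_eq_add_neg] using
    Real.multipliable_one_add_of_summable (summable_neg_mul_pow hQ x)

lemma qpR_pos (hQ : |Q| < 1) {x : ℝ} (hx : |x| < 1) : 0 < qpR Q x := by
  have hlog : Summable fun n : ℕ => Real.log (1 - x * Q ^ n) := by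
    simpa only [← sub_eq_add_neg] using
      Real.summable_log_one_add_of_summable (summable_neg_mul_pow hQ x)
  rw [qpR, ← Real.rexp_tsum_eq_tprod (one_sub_mul_pow_pos hQ hx) hlog]
  exact Real.exp_pos _

lemma prod_range_mul_qpR (hQ : |Q| < 1) (x : ℝ) (m : ℕ) :
    (∏ k ∈ range m, (1 - x * Q ^ k)) * qpR Q (x * Q ^ m) = qpR Q x := by
  have hshift : ∀ n, x * Q ^ m * Q ^ n = x * Q ^ (n + m) := fun n => by ring
  simp only [qpR, hshift]
  exact ((multipliable_qpR hQ (x * Q ^ m)).congr fun n => by rw [hshift]).prod_mul_tprod_nat_mul'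

end QPochhammer

section QBinomial

variable {Q : ℝ}

/-- `(a;Q)_m / (Q;Q)_m`. -/
noncomputable def qPochRatio (Q a : ℝ) (m : ℕ) : ℝ :=
  ∏ k ∈ range m, (1 - a * Q ^ k) / (1 - Q ^ (k + 1))

lemma qPochRatio_succ (Q a : ℝ) (m : ℕ) :
    qPochRatio Q a (m + 1) = qPochRatio Q a m * ((1 - a * Q ^ m) / (1 - Q ^ (m + 1))) :=
  prod_range_succ _ _

lemma qPochRatio_succ_mul (hQ : |Q| < 1) (a : ℝ) (m : ℕ) :
    qPochRatio Q a (m + 1) * (1 - Q ^ (m + 1)) = qPochRatio Q a m * (1 - a * Q ^ m) := by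
  have hden : 1 - Q ^ (m + 1) ≠ 0 := by
    rw [pow_succ']; exact (one_sub_mul_pow_pos hQ hQ m).ne'
  rw [qPochRatio_succ, mul_assoc, div_mul_cancel₀ _ hden]

lemma summable_norm_qPochRatio_mul_pow (hQ : |Q| < 1) (a : ℝ) {z : ℝ} (hz : |z| < 1) :
    Summable fun m : ℕ => ‖qPochRatio Q a m * z ^ m‖ := by
  have hQm : Tendsto (fun m : ℕ => Q ^ m) atTop (𝓝 0) :=
    tendsto_pow_atTop_nhds_zero_of_abs_lt_one hQ
  have hratio : Tendsto (fun m : ℕ => |(1 - a * Q ^ m) / (1 - Q * Q ^ m) * z|) atTop (𝓝 |z|) := by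
    simpa using ((((hQm.const_mul a).const_sub 1).div ((hQm.const_mul Q).const_sub 1)
      (by norm_num)).mul_const z).abs
  refine summable_of_ratio_norm_eventually_le (r := (1 + |z|) / 2) (by linarith) ?_
  filter_upwards [hratio.eventually_lt_const (show |z| < (1 + |z|) / 2 by linarith)] with m hm
  simp only [Real.norm_eq_abs, abs_abs, qPochRatio_succ, pow_succ']
  rw [show qPochRatio Q a m * ((1 - a * Q ^ m) / (1 - Q * Q ^ m)) * (z * z ^ m) =
      qPochRatio Q a m * z ^ m * ((1 - a * Q ^ m) / (1 - Q * Q ^ m) * z) by ring, abs_mul, mul_comm]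
  exact mul_le_mul_of_nonneg_right hm.le (abs_nonneg _)

lemma summable_qPochRatio_mul_pow (hQ : |Q| < 1) (a : ℝ) {z : ℝ} (hz : |z| < 1) :
    Summable fun m : ℕ => qPochRatio Q a m * z ^ m :=
  (summable_norm_qPochRatio_mul_pow hQ a hz).of_norm

noncomputable def qBinomialSeries (Q a z : ℝ) : ℝ := ∑' m : ℕ, qPochRatio Q a m * z ^ m

lemma one_sub_mul_qBinomialSeries (hQ : |Q| < 1) (a : ℝ) {z : ℝ} (hz : |z| < 1) :
    (1 - z) * qBinomialSeries Q a z = (1 - a * z) * qBinomialSeries Q a (z * Q) := by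
  have hzQ : |z * Q| < 1 := by simpa using abs_mul_pow_lt_one hQ hz 1
  have sA := summable_qPochRatio_mul_pow hQ a hz
  have sB := summable_qPochRatio_mul_pow hQ a hzQ
  -- by the recursion for `qPochRatio`, the `(m + 1)`-st coefficient of `F z - F (z Q)` is the
  -- `m`-th one of `z F z - a z F (z Q)`, and the constant term vanishes
  have key : ∑' m : ℕ, (qPochRatio Q a m * z ^ m - qPochRatio Q a m * (z * Q) ^ m) =
      ∑' m : ℕ, (z * (qPochRatio Q a m * z ^ m) - a * z * (qPochRatio Q a m * (z * Q) ^ m)) := by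
    rw [(sA.sub sB).tsum_eq_zero_add]
    simp only [pow_zero, mul_one, sub_self, zero_add]
    exact tsum_congr fun m => by linear_combination z ^ (m + 1) * qPochRatio_succ_mul hQ a m
  rw [sA.tsum_sub sB, (sA.mul_left z).tsum_sub (sB.mul_left (a * z)), tsum_mul_left,
    tsum_mul_left] at key
  unfold qBinomialSeries
  linear_combination key

lemma qBinomialSeries_mul_prod (hQ : |Q| < 1) (a : ℝ) {z : ℝ} (hz : |z| < 1) (n : ℕ) :
    qBinomialSeries Q a z * ∏ k ∈ range n, (1 - z * Q ^ k) =
      (∏ k ∈ range n, (1 - a * z * Q ^ k)) * qBinomialSeries Q a (z * Q ^ n) := by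
  induction n with
  | zero => simp
  | succ n ih =>
    have hstep := one_sub_mul_qBinomialSeries hQ a (abs_mul_pow_lt_one hQ hz n)
    rw [mul_assoc z, ← pow_succ] at hstep
    rw [prod_range_succ, prod_range_succ, ← mul_assoc, ih]
    linear_combination (∏ k ∈ range n, (1 - a * z * Q ^ k)) * hstep

lemma tendsto_qBinomialSeries_mul_pow (hQ : |Q| < 1) (a : ℝ) {z : ℝ} (hz : |z| < 1) :
    Tendsto (fun n : ℕ => qBinomialSeries Q a (z * Q ^ n)) atTop (𝓝 1) := by
  have hQn : Tendsto (fun n : ℕ => Q ^ n) atTop (𝓝 0) :=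
    tendsto_pow_atTop_nhds_zero_of_abs_lt_one hQ
  have hlim : ∑' m : ℕ, qPochRatio Q a m * 0 ^ m = 1 := by
    rw [tsum_eq_single 0 fun m hm => by simp [hm]]
    simp [qPochRatio]
  rw [← hlim]
  refine tendsto_tsum_of_dominated_convergence (summable_norm_qPochRatio_mul_pow hQ a hz)
    (fun m => by simpa using ((hQn.const_mul z).pow m).const_mul (qPochRatio Q a m))
    (Eventually.of_forall fun n m => ?_)
  have hzQn : |z| * |Q| ^ n ≤ |z| :=
    mul_le_of_le_one_right (abs_nonneg z) (pow_le_one₀ (abs_nonneg Q) hQ.le)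
  simp only [Real.norm_eq_abs, abs_mul, abs_pow]
  gcongr

theorem hasSum_qBinomial (hQ : |Q| < 1) (a : ℝ) {z : ℝ} (hz : |z| < 1) :
    HasSum (fun m : ℕ => qPochRatio Q a m * z ^ m) (qpR Q (a * z) / qpR Q z) := by
  have hlhs := tendsto_const_nhds (x := qBinomialSeries Q a z) |>.mul
    (multipliable_qpR hQ z).hasProd.tendsto_prod_nat
  have hrhs := (multipliable_qpR hQ (a * z)).hasProd.tendsto_prod_nat.mul
    (tendsto_qBinomialSeries_mul_pow hQ a hz)
  have heq := tendsto_nhds_unique (hlhs.congr (qBinomialSeries_mul_prod hQ a hz)) hrhs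
  convert (summable_qPochRatio_mul_pow hQ a hz).hasSum using 1
  rw [div_eq_iff (qpR_pos hQ hz).ne', qpR, qpR]
  simpa only [mul_one, qBinomialSeries] using heq.symm

end QBinomial

lemma qpR_div_qpR_eq_mul_qPochRatio {Q a : ℝ} (hQ : |Q| < 1) (ha : |a| < 1) (m : ℕ) :
    qpR Q (Q * Q ^ m) / qpR Q (a * Q ^ m) = qpR Q Q / qpR Q a * qPochRatio Q a m := by
  have hratio : qPochRatio Q a m =
      (∏ k ∈ range m, (1 - a * Q ^ k)) / ∏ k ∈ range m, (1 - Q * Q ^ k) := by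
    simp only [qPochRatio, prod_div_distrib, pow_succ']
  have hPa : 0 < ∏ k ∈ range m, (1 - a * Q ^ k) := prod_pos fun k _ => one_sub_mul_pow_pos hQ ha k
  have hPQ : 0 < ∏ k ∈ range m, (1 - Q * Q ^ k) := prod_pos fun k _ => one_sub_mul_pow_pos hQ hQ k
  have htail := qpR_pos hQ (abs_mul_pow_lt_one hQ ha m)
  rw [hratio, ← prod_range_mul_qpR hQ Q m, ← prod_range_mul_qpR hQ a m]
  field_simp

lemma abs_rpow_lt_one {q s : ℝ} (hq0 : 0 < q) (hq1 : q < 1) (hs : 0 < s) : |q ^ s| < 1 := by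
  rw [abs_of_pos (rpow_pos_of_pos hq0 s)]
  exact rpow_lt_one hq0.le hq1 hs

lemma qBeta2_eq {q s t : ℝ} (hq0 : 0 < q) (hq1 : q < 1) (hs : 0 < s) (ht : 0 < t) :
    qBeta2 q s t = (1 - q ^ 2) * qpR (q ^ 2) (q ^ 2) * qpR (q ^ 2) (q ^ (2 * (s + t))) /
      (qpR (q ^ 2) (q ^ (2 * s)) * qpR (q ^ 2) (q ^ (2 * t))) := by
  have hQ : |q ^ 2| < 1 := by
    rw [abs_of_pos (by positivity)]; nlinarith
  have h1Q : 0 < 1 - q ^ 2 := by nlinarith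
  have hPs := qpR_pos hQ (abs_rpow_lt_one hq0 hq1 (by positivity : 0 < 2 * s))
  have hPt := qpR_pos hQ (abs_rpow_lt_one hq0 hq1 (by positivity : 0 < 2 * t))
  have hPst := qpR_pos hQ (abs_rpow_lt_one hq0 hq1 (by positivity : 0 < 2 * (s + t)))
  have hPQ := qpR_pos hQ hQ
  have hexp : (1 - q ^ 2) ^ (1 - s) * (1 - q ^ 2) ^ (1 - t) =
      (1 - q ^ 2) * (1 - q ^ 2) ^ (1 - (s + t)) := by
    rw [← rpow_add h1Q, show 1 - s + (1 - t) = 1 + (1 - (s + t)) by ring, rpow_add h1Q, rpow_one]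
  have hpos := rpow_pos_of_pos h1Q (1 - (s + t))
  rw [qBeta2, qGamma2, qGamma2, qGamma2, mul_mul_mul_comm, hexp]
  field_simp

theorem stmt19 (q ν : ℝ) (hq0 : 0 < q) (hq1 : q < 1) (hν : 0 < ν) :
    2 * (1 - q) * ∑' m : ℕ,
        q ^ (m : ℝ) * qpR (q ^ 2) (q ^ (2 * (m : ℝ) + 2)) /
          qpR (q ^ 2) (q ^ (2 * ν + 2 * (m : ℝ) + 1)) =
      2 / (1 + q) * qBeta2 q (ν + 1 / 2) (1 / 2) := by
  set Q := q ^ 2 with hQ_def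
  set A := q ^ (2 * (ν + 1 / 2)) with hA_def
  have hQ : |Q| < 1 := by rw [abs_of_pos (by positivity)]; nlinarith
  have hA : |A| < 1 := abs_rpow_lt_one hq0 hq1 (by positivity)
  have hq : |q| < 1 := by rwa [abs_of_pos hq0]
  have hterm (m : ℕ) : q ^ (m : ℝ) * qpR Q (q ^ (2 * (m : ℝ) + 2)) /
      qpR Q (q ^ (2 * ν + 2 * (m : ℝ) + 1)) = qpR Q Q / qpR Q A * (qPochRatio Q A m * q ^ m) := by
    have hQm : q ^ (2 * (m : ℝ) + 2) = Q * Q ^ m := by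
      rw [show 2 * (m : ℝ) + 2 = ((2 * m + 2 : ℕ) : ℝ) by push_cast; ring, rpow_natCast]
      ring
    have hAm : q ^ (2 * ν + 2 * (m : ℝ) + 1) = A * Q ^ m := by
      rw [show 2 * ν + 2 * (m : ℝ) + 1 = 2 * (ν + 1 / 2) + ((2 * m : ℕ) : ℝ) by push_cast; ring,
        rpow_add hq0, rpow_natCast, pow_mul]
    rw [rpow_natCast, hQm, hAm, mul_div_assoc, qpR_div_qpR_eq_mul_qPochRatio hQ hA]
    ring
  have hsum := ((hasSum_qBinomial hQ A hq).mul_left (qpR Q Q / qpR Q A)).tsum_eq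
  have hAq : q ^ (2 * (ν + 1 / 2 + 1 / 2)) = A * q := by
    rw [mul_add, rpow_add hq0, show 2 * (1 / 2 : ℝ) = 1 by norm_num, rpow_one]
  rw [tsum_congr hterm, hsum, qBeta2_eq hq0 hq1 (by positivity) (by norm_num), hAq,
    show 2 * (1 / 2 : ℝ) = 1 by norm_num, rpow_one, ← hA_def, ← hQ_def]
  have hPq := qpR_pos hQ hq
  have hPA := qpR_pos hQ hA
  field_simp
  ring
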